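/- arXiv:2406.10814 — 3 statements merged into one kernel-verified Lean document; each statement's English description precedes it below -/
import Mathlib

section
/- For every positive integer k, there is a homomorphism of signed graphs from SPC(k+2) to SPC(k). -/
universe u v

/-- A signed graph on vertex set `V`: two symmetric relations giving the positive and the
negative adjacencies (a pair joined by both a positive and a negative edge is a digon). -/
structure SignedGraph (V : Type u) where
  pos : V → V → Prop
  neg : V → V → Prop
  pos_symm : ∀ ⦃x y : V⦄, pos x y → pos y x
  neg_symm : ∀ ⦃x y : V⦄, neg x y → neg y x

namespace SignedGraph

variable {V : Type u} {W : Type v}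

/-- Walks in a signed graph, recording the sign of every step. -/
inductive Walk (G : SignedGraph V) : V → V → Type u
  | nil (v : V) : Walk G v v
  | consPos {u v w : V} (h : G.pos u v) (p : Walk G v w) : Walk G u w
  | consNeg {u v w : V} (h : G.neg u v) (p : Walk G v w) : Walk G u w

namespace Walk

variable {G : SignedGraph V}

/-- The length of a walk. -/
def length : ∀ {u v : V}, G.Walk u v → ℕ
  | _, _, .nil _ => 0
  | _, _, .consPos _ p => p.length + 1
  | _, _, .consNeg _ p => p.length + 1

/-- The number of negative edges of a walk (counted with multiplicity). -/
def negCount : ∀ {u v : V}, G.Walk u v → ℕ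
  | _, _, .nil _ => 0
  | _, _, .consPos _ p => p.negCount
  | _, _, .consNeg _ p => p.negCount + 1

/-- Concatenation of walks. -/
def append : ∀ {u v w : V}, G.Walk u v → G.Walk v w → G.Walk u w
  | _, _, _, .nil _, q => q
  | _, _, _, .consPos h p, q => .consPos h (p.append q)
  | _, _, _, .consNeg h p, q => .consNeg h (p.append q)

/-- Reversal of a walk. -/
def reverse : ∀ {u v : V}, G.Walk u v → G.Walk v u
  | _, _, .nil v => .nil v
  | _, _, .consPos h p => p.reverse.append (.consPos (G.pos_symm h) (.nil _))
  | _, _, .consNeg h p => p.reverse.append (.consNeg (G.neg_symm h) (.nil _))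

end Walk

/-- `g_{ij}(G,σ)`: the length of a shortest (nontrivial) closed walk in which the number of
negative edges has parity `i` and the length has parity `j`; `⊤ = ∞` if no such walk exists. -/
noncomputable def gir (G : SignedGraph V) (i j : ZMod 2) : ℕ∞ :=
  sInf {n : ℕ∞ | ∃ (v : V) (p : G.Walk v v),
    0 < p.length ∧ (p.negCount : ZMod 2) = i ∧ (p.length : ZMod 2) = j ∧ (p.length : ℕ∞) = n}

/-- The negative (unbalanced) girth: the length of a shortest negative closed walk, which is
the same as the length of a shortest negative cycle (`⊤ = ∞` if there is none). -/
noncomputable def negGirth (G : SignedGraph V) : ℕ∞ :=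
  sInf {n : ℕ∞ | ∃ (v : V) (p : G.Walk v v), Odd p.negCount ∧ (p.length : ℕ∞) = n}

/-- The odd girth of the underlying graph: the length of a shortest closed walk of odd length,
which is the same as the length of a shortest odd cycle (`⊤ = ∞` if there is none). -/
noncomputable def oddGirth (G : SignedGraph V) : ℕ∞ :=
  sInf {n : ℕ∞ | ∃ (v : V) (p : G.Walk v v), Odd p.length ∧ (p.length : ℕ∞) = n}

/-- Switching a signed graph at a set `X` of vertices: the sign of every edge with exactly one
endpoint in `X` is negated. -/
def switch (G : SignedGraph V) (X : Set V) : SignedGraph V where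
  pos x y := (G.pos x y ∧ ((x ∈ X) ↔ (y ∈ X))) ∨ (G.neg x y ∧ ¬((x ∈ X) ↔ (y ∈ X)))
  neg x y := (G.neg x y ∧ ((x ∈ X) ↔ (y ∈ X))) ∨ (G.pos x y ∧ ¬((x ∈ X) ↔ (y ∈ X)))
  pos_symm := by
    rintro x y (⟨h, hxy⟩ | ⟨h, hxy⟩)
    · exact Or.inl ⟨G.pos_symm h, hxy.symm⟩
    · exact Or.inr ⟨G.neg_symm h, fun h' => hxy h'.symm⟩
  neg_symm := by
    rintro x y (⟨h, hxy⟩ | ⟨h, hxy⟩)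
    · exact Or.inl ⟨G.neg_symm h, hxy.symm⟩
    · exact Or.inr ⟨G.pos_symm h, fun h' => hxy h'.symm⟩

/-- A homomorphism of signed graphs: a vertex map which, after replacing the signature of the
source by a switching-equivalent one, preserves edges together with their signs. -/
def Hom (G : SignedGraph V) (H : SignedGraph W) : Prop :=
  ∃ (X : Set V) (f : V → W),
    (∀ ⦃x y : V⦄, (G.switch X).pos x y → H.pos (f x) (f y)) ∧
    (∀ ⦃x y : V⦄, (G.switch X).neg x y → H.neg (f x) (f y))

/-- Isomorphism of signed graphs: a bijection carrying positive edges to positive edges and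
negative edges to negative edges. -/
def Iso (G : SignedGraph V) (H : SignedGraph W) : Prop :=
  ∃ f : V ≃ W, (∀ x y, G.pos x y ↔ H.pos (f x) (f y)) ∧ (∀ x y, G.neg x y ↔ H.neg (f x) (f y))

/-- Two signed graphs are switching-isomorphic if one is isomorphic to a switching of the
other. -/
def SwitchIso (G : SignedGraph V) (H : SignedGraph W) : Prop :=
  ∃ X : Set W, Iso G (H.switch X)

/-- The induced signed subgraph on a set of vertices. -/
def induce (G : SignedGraph V) (X : Set V) : SignedGraph X where
  pos a b := G.pos a b
  neg a b := G.neg a b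
  pos_symm := fun _ _ h => G.pos_symm h
  neg_symm := fun _ _ h => G.neg_symm h

/-- The "same connected component" equivalence relation. -/
def reachSetoid (G : SignedGraph V) : Setoid V :=
  ⟨fun u v => Nonempty (G.Walk u v),
   ⟨fun v => ⟨Walk.nil v⟩,
    fun h => h.elim fun p => ⟨p.reverse⟩,
    fun h h' => h.elim fun p => h'.elim fun q => ⟨p.append q⟩⟩⟩

/-- The underlying graph is bipartite. -/
def Bipartite (G : SignedGraph V) : Prop :=
  ∃ c : V → Bool, ∀ x y, (G.pos x y ∨ G.neg x y) → c x ≠ c y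

/-- The extended double cover of a signed graph: vertices `x₀, x₁` for every vertex `x`,
a negative edge `x₀x₁` for every vertex `x`, positive edges `x₀y₀, x₁y₁` for every positive
edge `xy` and positive edges `x₀y₁, x₁y₀` for every negative edge `xy`. -/
def EDC (G : SignedGraph V) : SignedGraph (V × ZMod 2) where
  pos p q := (G.pos p.1 q.1 ∧ p.2 = q.2) ∨ (G.neg p.1 q.1 ∧ p.2 ≠ q.2)
  neg p q := p.1 = q.1 ∧ p.2 ≠ q.2
  pos_symm := by
    rintro p q (⟨h, e⟩ | ⟨h, e⟩)
    · exact Or.inl ⟨G.pos_symm h, e.symm⟩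
    · exact Or.inr ⟨G.neg_symm h, fun h' => e h'.symm⟩
  neg_symm := by
    rintro p q ⟨h, e⟩
    exact ⟨h.symm, fun h' => e h'.symm⟩

/-- The common product of two signed graphs: the positive edges form the Cartesian product of
the positive subgraphs, the negative edges form the categorical product of the negative
subgraphs. -/
def cprod (G : SignedGraph V) (H : SignedGraph W) : SignedGraph (V × W) where
  pos p q := (G.pos p.1 q.1 ∧ p.2 = q.2) ∨ (p.1 = q.1 ∧ H.pos p.2 q.2)
  neg p q := G.neg p.1 q.1 ∧ H.neg p.2 q.2
  pos_symm := by
    rintro p q (⟨h, e⟩ | ⟨e, h⟩)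
    · exact Or.inl ⟨G.pos_symm h, e.symm⟩
    · exact Or.inr ⟨e.symm, H.pos_symm h⟩
  neg_symm := fun _ _ h => ⟨G.neg_symm h.1, H.neg_symm h.2⟩

end SignedGraph

section Cayley

lemma sub_comm_of_two_torsion {Γ : Type u} [AddCommGroup Γ] (h2 : ∀ x : Γ, x + x = 0)
    (x y : Γ) : y - x = x - y := by
  rw [← neg_sub x y]
  exact neg_eq_of_add_eq_zero_left (h2 (x - y))

/-- The signed Cayley graph `(Γ, S⁺, S⁻)` on an elementary abelian `2`-group `Γ`:
`x` and `y` are joined by a positive edge when `x - y ∈ S⁺` and by a negative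
edge when `x - y ∈ S⁻`. -/
def SCayley2 (Γ : Type u) [AddCommGroup Γ] (h2 : ∀ x : Γ, x + x = 0)
    (Sp Sn : Set Γ) : SignedGraph Γ where
  pos x y := x - y ∈ Sp
  neg x y := x - y ∈ Sn
  pos_symm := fun x y h => by
    show y - x ∈ Sp
    rw [sub_comm_of_two_torsion h2 x y]
    exact h
  neg_symm := fun x y h => by
    show y - x ∈ Sn
    rw [sub_comm_of_two_torsion h2 x y]
    exact h

lemma pi2 (n : ℕ) : ∀ x : Fin n → ZMod 2, x + x = 0 := by
  intro x
  funext i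
  have h : ∀ a : ZMod 2, a + a = 0 := by decide
  exact h (x i)

/-- The signed projective cube `SPC(k)`: the signed Cayley graph on `ℤ₂ᵏ` whose positive
difference set is the standard basis `{e₁, …, e_k}` and whose negative difference set is `{J}`,
`J` being the all-ones vector. -/
def SPC (k : ℕ) : SignedGraph (Fin k → ZMod 2) :=
  SCayley2 _ (pi2 k) {z | ∃ i : Fin k, z = Pi.single i 1} {fun _ => 1}

/-- `SPC°(k)`: the signed projective cube together with a positive loop at every vertex, i.e.
the signed Cayley graph `(ℤ₂ᵏ, {0, e₁, …, e_k}, {J})`. -/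
def SPCo (k : ℕ) : SignedGraph (Fin k → ZMod 2) :=
  SCayley2 _ (pi2 k) ({z | z = 0} ∪ {z | ∃ i : Fin k, z = Pi.single i 1}) {fun _ => 1}

/-- The Hamming weight of a vector in `ℤ₂ⁿ`. -/
def wt {n : ℕ} (x : Fin n → ZMod 2) : ℕ := (Finset.univ.filter fun i => x i ≠ 0).card

end Cayley

/-- Auxiliary map folding the last two coordinates onto all others. -/
def foldMap (k : ℕ) (x : Fin (k+2) → ZMod 2) : Fin k → ZMod 2 :=
  fun j => x ⟨j.val, by omega⟩ + x ⟨k, by omega⟩ + x ⟨k+1, by omega⟩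

lemma foldMap_sub (k : ℕ) (x y : Fin (k+2) → ZMod 2) (j : Fin k) :
    (foldMap k x - foldMap k y) j
      = (x ⟨j.val, by omega⟩ - y ⟨j.val, by omega⟩)
        + (x ⟨k, by omega⟩ - y ⟨k, by omega⟩)
        + (x ⟨k+1, by omega⟩ - y ⟨k+1, by omega⟩) := by
  show foldMap k x j - foldMap k y j = _
  unfold foldMap
  ring

lemma two_eq_zero' : (1 : ZMod 2) + 1 = 0 := by decide

/-- for every positive integer `k`, `SPC(k+2)` maps to `SPC(k)`. -/
theorem spc_hom_down (k : ℕ) (hk : 1 ≤ k) : SignedGraph.Hom (SPC (k+2)) (SPC k) := by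
  classical
  set a : Fin (k+2) := ⟨k, by omega⟩ with ha
  set b : Fin (k+2) := ⟨k+1, by omega⟩ with hb
  have hz2 : ∀ c : ZMod 2, ¬((c + 1 = 1) ↔ (c = 1)) := by decide
  refine ⟨{x | x a + x b = 1}, foldMap k, ?_, ?_⟩
  · rintro x y (⟨hp, hside⟩ | ⟨hn, hside⟩)
    · obtain ⟨i, hxy⟩ := hp
      have hd : ∀ j : Fin (k+2), x j - y j = (Pi.single i 1 : Fin (k+2) → ZMod 2) j := fun j => by exact congrFun hxy j
      have hda := hd a
      have hdb := hd b
      rcases lt_or_ge i.val k with hik | hik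
      · -- maps to positive edge e_i
        have hia : a ≠ i := by simp [ha, Fin.ext_iff]; omega
        have hib : b ≠ i := by simp [hb, Fin.ext_iff]; omega
        rw [Pi.single_eq_of_ne hia, sub_eq_zero] at hda
        rw [Pi.single_eq_of_ne hib, sub_eq_zero] at hdb
        refine ⟨⟨i.val, hik⟩, funext fun j => ?_⟩
        rw [foldMap_sub, ← ha, ← hb, hda, hdb, sub_self, sub_self, add_zero, add_zero,
          hd ⟨j.val, by omega⟩]
        by_cases hji : j.val = i.val
        · have h1 : (⟨j.val, by omega⟩ : Fin (k+2)) = i := by simp [Fin.ext_iff, hji]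
          have h2 : j = (⟨i.val, hik⟩ : Fin k) := by simp [Fin.ext_iff, hji]
          rw [h1, h2, Pi.single_eq_same, Pi.single_eq_same]
        · have h1 : (⟨j.val, by omega⟩ : Fin (k+2)) ≠ i := by simp [Fin.ext_iff, hji]
          have h2 : j ≠ (⟨i.val, hik⟩ : Fin k) := by simp [Fin.ext_iff, hji]
          rw [Pi.single_eq_of_ne h1, Pi.single_eq_of_ne h2]
      · -- impossible: i = a or i = b flips the side
        exfalso
        have hs : x a + x b = (y a + y b) + 1 := by
          rcases Nat.lt_or_ge i.val (k+1) with h' | h'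
          · have hieq : i = a := by simp [ha, Fin.ext_iff]; omega
            rw [hieq, Pi.single_eq_same] at hda
            have hib : b ≠ i := by rw [hieq]; simp [ha, hb, Fin.ext_iff]
            rw [Pi.single_eq_of_ne hib, sub_eq_zero] at hdb
            rw [eq_add_of_sub_eq hda, hdb]; ring
          · have hieq : i = b := by
              have := i.isLt; simp [hb, Fin.ext_iff]; omega
            rw [hieq, Pi.single_eq_same] at hdb
            have hia : a ≠ i := by rw [hieq]; simp [ha, hb, Fin.ext_iff]
            rw [Pi.single_eq_of_ne hia, sub_eq_zero] at hda
            rw [eq_add_of_sub_eq hdb, hda]; ring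
        have hside' : (x a + x b = 1) ↔ (y a + y b = 1) := hside
        rw [hs] at hside'
        exact hz2 _ hside'
    · -- negative edge with side flip: impossible, J keeps sides
      exfalso
      have hxy : x - y = fun _ => (1 : ZMod 2) := hn
      have hd : ∀ j : Fin (k+2), x j - y j = 1 := fun j => congrFun hxy j
      have hs : x a + x b = y a + y b := by
        rw [eq_add_of_sub_eq (hd a), eq_add_of_sub_eq (hd b)]
        linear_combination two_eq_zero'
      have : (x a + x b = 1) ↔ (y a + y b = 1) := by rw [hs]
      exact hside this
  · rintro x y (⟨hn, hside⟩ | ⟨hp, hside⟩)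
    · -- J maps to J
      have hxy : x - y = fun _ => (1 : ZMod 2) := hn
      have hd : ∀ j : Fin (k+2), x j - y j = 1 := fun j => congrFun hxy j
      show foldMap k x - foldMap k y = fun _ => (1 : ZMod 2)
      funext j
      rw [foldMap_sub, hd, hd, hd]
      decide
    · -- e_a or e_b maps to J
      obtain ⟨i, hxy⟩ := hp
      have hd : ∀ j : Fin (k+2), x j - y j = (Pi.single i 1 : Fin (k+2) → ZMod 2) j := fun j => by exact congrFun hxy j
      have hda := hd a
      have hdb := hd b
      rcases lt_or_ge i.val k with hik | hik
      · exfalso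
        have hia : a ≠ i := by simp [ha, Fin.ext_iff]; omega
        have hib : b ≠ i := by simp [hb, Fin.ext_iff]; omega
        rw [Pi.single_eq_of_ne hia, sub_eq_zero] at hda
        rw [Pi.single_eq_of_ne hib, sub_eq_zero] at hdb
        exact hside (by rw [show x ∈ {x | x a + x b = 1} ↔ y ∈ {x | x a + x b = 1}
          from by simp only [Set.mem_setOf_eq, hda, hdb]])
      · show foldMap k x - foldMap k y = fun _ => (1 : ZMod 2)
        funext j
        rw [foldMap_sub, ← ha, ← hb]
        have hij : (⟨j.val, by omega⟩ : Fin (k+2)) ≠ i := by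
          simp [Fin.ext_iff]; omega
        have hj := hd ⟨j.val, by omega⟩
        rw [Pi.single_eq_of_ne hij] at hj
        rw [hj]
        rcases Nat.lt_or_ge i.val (k+1) with h' | h'
        · have hieq : i = a := by simp [ha, Fin.ext_iff]; omega
          rw [hieq, Pi.single_eq_same] at hda
          have hib : b ≠ i := by rw [hieq]; simp [ha, hb, Fin.ext_iff]
          rw [Pi.single_eq_of_ne hib, sub_eq_zero] at hdb
          rw [hda, hdb, sub_self]
          ring
        · have hieq : i = b := by
            have := i.isLt; simp [hb, Fin.ext_iff]; omega
          rw [hieq, Pi.single_eq_same] at hdb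
          have hia : a ≠ i := by rw [hieq]; simp [ha, hb, Fin.ext_iff]
          rw [Pi.single_eq_of_ne hia, sub_eq_zero] at hda
          rw [hda, hdb, sub_self]
          ring
end

section
/- For every positive integer k, the circular chromatic number of the signed projective cube SPC(k) equals 4: SPC(k) admits a circular 4-coloring, and for every real r with 2 ≤ r < 4 it admits no circular r-coloring. -/
universe u v

/-- A circular `r`-coloring of a signed graph: a map to the circle `ℝ/rℤ` of circumference `r`
such that the ends of every negative edge are at distance at least `1` and the ends of every
positive edge are at distance at most `r/2 - 1`. -/
def IsCircularColoring (r : ℝ) {V : Type u} (G : SignedGraph V) (φ : V → AddCircle r) : Prop :=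
  (∀ x y, G.neg x y → 1 ≤ dist (φ x) (φ y)) ∧
  (∀ x y, G.pos x y → dist (φ x) (φ y) ≤ r / 2 - 1)


/-! ### Auxiliary lemmas for Statement 15 -/

section SPCAux

lemma round_abs_min (x : ℝ) (m : ℤ) : |x - round x| ≤ |x - m| := by
  rcases eq_or_ne m (round x) with rfl | h
  · exact le_refl _
  · have h1 : |x - round x| ≤ 1/2 := abs_sub_round x
    have h2 : (1:ℝ) ≤ |(round x : ℝ) - (m:ℝ)| := by
      have h0 : (1:ℤ) ≤ |round x - m| := Int.one_le_abs (sub_ne_zero.mpr (Ne.symm h))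
      have h2a : (1:ℝ) ≤ ((|round x - m| : ℤ) : ℝ) := by exact_mod_cast h0
      push_cast at h2a
      linarith
    have h3 : |(round x:ℝ) - m| ≤ |(round x:ℝ) - x| + |x - m| := abs_sub_le _ _ _
    rw [abs_sub_comm (round x : ℝ) x] at h3
    linarith

lemma addCircle_dist_eq (r a b : ℝ) :
    dist ((a : AddCircle r)) ((b : AddCircle r)) = |a - b - round (r⁻¹ * (a - b)) * r| := by
  rw [dist_eq_norm, ← QuotientAddGroup.mk_sub]
  exact AddCircle.norm_eq r

lemma addCircle_dist_le {r : ℝ} (hr : 0 < r) (a b : ℝ) (m : ℤ) :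
    dist ((a : AddCircle r)) ((b : AddCircle r)) ≤ |a - b - m * r| := by
  rw [addCircle_dist_eq]
  have key : ∀ c : ℤ, |(a - b) - c * r| = r * |r⁻¹ * (a - b) - c| := by
    intro c
    rw [show (a - b) - c * r = r * (r⁻¹ * (a - b) - c) by field_simp]
    rw [abs_mul, abs_of_pos hr]
  rw [key, key]
  exact mul_le_mul_of_nonneg_left (round_abs_min _ m) hr.le

lemma addCircle_coe_sub_int_mul (r x : ℝ) (m : ℤ) :
    ((x - m * r : ℝ) : AddCircle r) = (x : AddCircle r) := by
  have h0 : (((m:ℝ) * r : ℝ) : AddCircle r) = 0 := by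
    rw [AddCircle.coe_eq_zero_iff]
    exact ⟨m, by simp [zsmul_eq_mul]⟩
  calc ((x - m * r : ℝ) : AddCircle r)
      = (x : AddCircle r) - (((m:ℝ) * r : ℝ) : AddCircle r) := by rw [← QuotientAddGroup.mk_sub]
    _ = (x : AddCircle r) := by rw [h0, sub_zero]

lemma snoc_sub_snoc {n : ℕ} (y z : Fin n → ZMod 2) (b c : ZMod 2) :
    (Fin.snoc y b : Fin (n+1) → ZMod 2) - (Fin.snoc z c : Fin (n+1) → ZMod 2)
      = (Fin.snoc (y - z) (b - c) : Fin (n+1) → ZMod 2) := by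
  funext j
  refine Fin.lastCases ?_ (fun j => ?_) j <;> simp

lemma single_snoc {n : ℕ} (i : Fin n) :
    (Fin.snoc (Pi.single i (1 : ZMod 2)) 0 : Fin (n+1) → ZMod 2) = Pi.single i.castSucc 1 := by
  funext j
  refine Fin.lastCases ?_ (fun j => ?_) j
  · rw [Fin.snoc_last, Pi.single_eq_of_ne (Fin.castSucc_lt_last i).ne']
  · rw [Fin.snoc_castSucc]
    rcases eq_or_ne j i with rfl | h
    · simp
    · rw [Pi.single_eq_of_ne h, Pi.single_eq_of_ne (by simpa [Fin.castSucc_inj] using h)]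

lemma snoc_ones {n : ℕ} :
    (Fin.snoc (fun _ => (1:ZMod 2)) 1 : Fin (n+1) → ZMod 2) = fun _ => 1 := by
  funext j; refine Fin.lastCases ?_ (fun j => ?_) j <;> simp

lemma snoc_zero_one {n : ℕ} :
    (Fin.snoc (0 : Fin n → ZMod 2) 1 : Fin (n+1) → ZMod 2) = Pi.single (Fin.last n) 1 := by
  funext j
  refine Fin.lastCases ?_ (fun j => ?_) j
  · simp
  · rw [Fin.snoc_castSucc, Pi.single_eq_of_ne (Fin.castSucc_lt_last j).ne]
    rfl

/-- Midpoints of two short chords joined by two positive edges stay close. -/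
lemma mid_close {r e : ℝ} (hr0 : 0 < r) (hr4 : r < 4) (he : e = r / 2 - 1)
    {a b u v : ℝ} {m1 m2 : ℤ}
    (hA : |a - b - m1 * r| ≤ e) (hB : |a + u - (b + v) - m2 * r| ≤ e)
    (hu : |u| ≤ e) (hv : |v| ≤ e) :
    |a + u / 2 - (b + v / 2) - m1 * r| ≤ e := by
  rw [abs_le] at hA hB hu hv
  have hmm : m1 = m2 := by
    have e1 : ((m2 - m1 : ℤ) : ℝ) * r
        = (a - b - m1 * r) - (a + u - (b + v) - m2 * r) - (v - u) := by push_cast; ring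
    have e2a : (-1 : ℝ) * r < ((m2 - m1 : ℤ) : ℝ) * r := by
      rw [e1]; linarith
    have e2b : ((m2 - m1 : ℤ) : ℝ) * r < 1 * r := by
      rw [e1]; linarith
    have l1 : (-1 : ℝ) < ((m2 - m1 : ℤ) : ℝ) := lt_of_mul_lt_mul_right e2a hr0.le
    have l2 : ((m2 - m1 : ℤ) : ℝ) < 1 := lt_of_mul_lt_mul_right e2b hr0.le
    have l1' : (-1 : ℤ) < m2 - m1 := by exact_mod_cast l1
    have l2' : m2 - m1 < 1 := by exact_mod_cast l2
    omega
  rw [← hmm] at hB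
  rw [abs_le]
  constructor <;> [linarith [hA.1, hB.1]; linarith [hA.2, hB.2]]

/-- Midpoints of two short chords joined by two negative edges stay far apart. -/
lemma mid_far {r e : ℝ} (hr4 : r < 4) (he : e = r / 2 - 1)
    {a b u v : ℝ} (hu : |u| ≤ e) (hv : |v| ≤ e) (m : ℤ)
    (hA : 1 ≤ |a - (b + v) - m * r|) (hB : 1 ≤ |a + u - b - m * r|) :
    1 ≤ |a + u / 2 - (b + v / 2) - m * r| := by
  rw [abs_le] at hu hv
  rw [le_abs] at hA hB ⊢
  rcases hA with hA | hA <;> rcases hB with hB | hB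
  · left; linarith
  · exfalso; linarith
  · exfalso; linarith
  · right; linarith

/-- The induction step: a circular `r`-coloring of `SPC(n+1)` yields one of `SPC(n)`. -/
lemma spc_step (r : ℝ) (hr0 : 0 < r) (hr4 : r < 4) (n : ℕ)
    (φ : (Fin (n+1) → ZMod 2) → AddCircle r)
    (h : IsCircularColoring r (SPC (n+1)) φ) :
    ∃ ψ : (Fin n → ZMod 2) → AddCircle r, IsCircularColoring r (SPC n) ψ := by
  obtain ⟨hneg, hpos⟩ := h
  obtain ⟨f, hf⟩ : ∃ f : (Fin (n+1) → ZMod 2) → ℝ, ∀ v, ((f v : ℝ) : AddCircle r) = φ v := by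
    have hsurj : ∀ z : AddCircle r, ∃ x : ℝ, (x : AddCircle r) = z :=
      fun z => QuotientAddGroup.induction_on z fun x => ⟨x, rfl⟩
    choose f hf using fun v => hsurj (φ v)
    exact ⟨f, hf⟩
  obtain ⟨U, hUabs, hU1⟩ :
      ∃ U : (Fin n → ZMod 2) → ℝ,
        (∀ y, |U y| ≤ r / 2 - 1) ∧
        (∀ y, ((f (Fin.snoc y 0) + U y : ℝ) : AddCircle r) = φ (Fin.snoc y 1)) := by
    refine ⟨fun y => f (Fin.snoc y 1) - f (Fin.snoc y 0)
      - round (r⁻¹ * (f (Fin.snoc y 1) - f (Fin.snoc y 0))) * r, fun y => ?_, fun y => ?_⟩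
    · show |f (Fin.snoc y 1) - f (Fin.snoc y 0)
        - round (r⁻¹ * (f (Fin.snoc y 1) - f (Fin.snoc y 0))) * r| ≤ r / 2 - 1
      have hpedge : (SPC (n+1)).pos (Fin.snoc y 1) (Fin.snoc y 0) := by
        refine ⟨Fin.last n, ?_⟩
        rw [snoc_sub_snoc, sub_self]
        rw [show (1 : ZMod 2) - 0 = 1 by decide, snoc_zero_one]
      have hd := hpos _ _ hpedge
      rw [← addCircle_dist_eq, hf, hf]
      exact hd
    · show ((f (Fin.snoc y 0) + (f (Fin.snoc y 1) - f (Fin.snoc y 0)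
        - round (r⁻¹ * (f (Fin.snoc y 1) - f (Fin.snoc y 0))) * r) : ℝ) : AddCircle r)
          = φ (Fin.snoc y 1)
      rw [show f (Fin.snoc y 0) + (f (Fin.snoc y 1) - f (Fin.snoc y 0)
          - round (r⁻¹ * (f (Fin.snoc y 1) - f (Fin.snoc y 0))) * r)
        = f (Fin.snoc y 1) - round (r⁻¹ * (f (Fin.snoc y 1) - f (Fin.snoc y 0))) * r by ring]
      rw [addCircle_coe_sub_int_mul, hf]
  refine ⟨fun y => ((f (Fin.snoc y 0) + U y / 2 : ℝ) : AddCircle r), ?_, ?_⟩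
  · intro y z hyz
    replace hyz : y - z = fun _ => (1 : ZMod 2) := hyz
    have hE1 : (SPC (n+1)).neg (Fin.snoc y 0) (Fin.snoc z 1) := by
      show _ - _ = _
      rw [snoc_sub_snoc, hyz, show (0 : ZMod 2) - 1 = 1 by decide, snoc_ones]
    have hE2 : (SPC (n+1)).neg (Fin.snoc y 1) (Fin.snoc z 0) := by
      show _ - _ = _
      rw [snoc_sub_snoc, hyz, show (1 : ZMod 2) - 0 = 1 by decide, snoc_ones]
    have hA : ∀ m : ℤ, 1 ≤ |f (Fin.snoc y 0) - (f (Fin.snoc z 0) + U z) - m * r| := by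
      intro m
      refine le_trans ?_ (addCircle_dist_le hr0 _ _ m)
      rw [hf, hU1]
      exact hneg _ _ hE1
    have hB : ∀ m : ℤ, 1 ≤ |f (Fin.snoc y 0) + U y - f (Fin.snoc z 0) - m * r| := by
      intro m
      refine le_trans ?_ (addCircle_dist_le hr0 _ _ m)
      rw [hU1, hf]
      exact hneg _ _ hE2
    show 1 ≤ dist ((f (Fin.snoc y 0) + U y / 2 : ℝ) : AddCircle r)
        ((f (Fin.snoc z 0) + U z / 2 : ℝ) : AddCircle r)
    rw [addCircle_dist_eq]
    exact mid_far hr4 rfl (hUabs y) (hUabs z) _ (hA _) (hB _)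
  · intro y z hyz
    obtain ⟨i, hyz⟩ := hyz
    have hE0 : (SPC (n+1)).pos (Fin.snoc y 0) (Fin.snoc z 0) :=
      ⟨i.castSucc, by rw [snoc_sub_snoc, hyz, sub_self, single_snoc]⟩
    have hE1 : (SPC (n+1)).pos (Fin.snoc y 1) (Fin.snoc z 1) :=
      ⟨i.castSucc, by rw [snoc_sub_snoc, hyz, sub_self, single_snoc]⟩
    have hA : |f (Fin.snoc y 0) - f (Fin.snoc z 0)
        - round (r⁻¹ * (f (Fin.snoc y 0) - f (Fin.snoc z 0))) * r| ≤ r / 2 - 1 := by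
      rw [← addCircle_dist_eq, hf, hf]
      exact hpos _ _ hE0
    have hB : |f (Fin.snoc y 0) + U y - (f (Fin.snoc z 0) + U z)
        - round (r⁻¹ * (f (Fin.snoc y 0) + U y - (f (Fin.snoc z 0) + U z))) * r| ≤ r / 2 - 1 := by
      rw [← addCircle_dist_eq, hU1, hU1]
      exact hpos _ _ hE1
    show dist ((f (Fin.snoc y 0) + U y / 2 : ℝ) : AddCircle r)
        ((f (Fin.snoc z 0) + U z / 2 : ℝ) : AddCircle r) ≤ r / 2 - 1
    refine le_trans (addCircle_dist_le hr0 _ _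
      (round (r⁻¹ * (f (Fin.snoc y 0) - f (Fin.snoc z 0))))) ?_
    exact mid_close hr0 hr4 rfl hA hB (hUabs y) (hUabs z)

lemma spc_no_coloring (r : ℝ) (hr2 : 2 ≤ r) (hr4 : r < 4) (k : ℕ) :
    ¬ ∃ φ : (Fin k → ZMod 2) → AddCircle r, IsCircularColoring r (SPC k) φ := by
  have hr0 : (0:ℝ) < r := by linarith
  induction k with
  | zero =>
    rintro ⟨φ, hneg, -⟩
    have hE : (SPC 0).neg (fun _ => 0) (fun _ => 0) := by
      show _ - _ = _
      funext i
      exact i.elim0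
    have h1 := hneg _ _ hE
    rw [dist_self] at h1
    linarith
  | succ n ih =>
    rintro ⟨φ, hφ⟩
    exact ih (spc_step r hr0 hr4 n φ hφ)

lemma zmod2_val_le_one (a : ZMod 2) : ZMod.val a ≤ 1 := by
  have := ZMod.val_lt a
  omega

lemma zmod2_val_ne {a b : ZMod 2} (h : a - b = 1) : ZMod.val a ≠ ZMod.val b := by
  have hc : ∀ c : ZMod 2, c = 0 ∨ c = 1 := by decide
  rcases hc a with h1 | h1 <;> rcases hc b with h2 | h2 <;> subst h1 <;> subst h2 <;>
    revert h <;> decide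

lemma int_dist_ge (sx sy ax ay : ℕ) (hsx : sx ≤ 1) (hsy : sy ≤ 1) (hax : ax ≤ 1) (hay : ay ≤ 1)
    (hne : ax ≠ ay) (m : ℤ) :
    1 ≤ |((sx : ℝ) + 2 * (ax : ℝ)) - ((sy : ℝ) + 2 * (ay : ℝ)) - m * 4| := by
  have hD : ((sx : ℝ) + 2 * (ax : ℝ)) - ((sy : ℝ) + 2 * (ay : ℝ)) - m * 4
      = (((sx : ℤ) - sy + 2 * ((ax : ℤ) - ay) - 4 * m : ℤ) : ℝ) := by push_cast; ring
  rw [hD]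
  have h1 : (1:ℤ) ≤ |(sx : ℤ) - sy + 2 * ((ax : ℤ) - ay) - 4 * m| := by
    refine Int.one_le_abs ?_
    omega
  exact_mod_cast h1

lemma int_dist_le (sx sy ax ay : ℕ) (hsx : sx ≤ 1) (hsy : sy ≤ 1) (hax : ax ≤ 1) (hay : ay ≤ 1)
    (hne : sx ≠ sy) :
    dist ((((sx : ℝ) + 2 * (ax : ℝ)) : ℝ) : AddCircle (4:ℝ))
      ((((sy : ℝ) + 2 * (ay : ℝ)) : ℝ) : AddCircle (4:ℝ)) ≤ 1 := by
  have hD : ∀ m : ℤ, ((sx : ℝ) + 2 * (ax : ℝ)) - ((sy : ℝ) + 2 * (ay : ℝ)) - m * 4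
      = (((sx : ℤ) - sy + 2 * ((ax : ℤ) - ay) - 4 * m : ℤ) : ℝ) := fun m => by push_cast; ring
  have hE : ∃ m : ℤ,
      |((sx : ℝ) + 2 * (ax : ℝ)) - ((sy : ℝ) + 2 * (ay : ℝ)) - m * 4| ≤ 1 := by
    have hcase : ((sx : ℤ) - sy + 2 * ((ax : ℤ) - ay) = 1)
        ∨ ((sx : ℤ) - sy + 2 * ((ax : ℤ) - ay) = -1)
        ∨ ((sx : ℤ) - sy + 2 * ((ax : ℤ) - ay) = 3)
        ∨ ((sx : ℤ) - sy + 2 * ((ax : ℤ) - ay) = -3) := by omega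
    rcases hcase with h | h | h | h
    · refine ⟨0, ?_⟩
      have h' : (sx : ℤ) - sy + 2 * ((ax : ℤ) - ay) - 4 * 0 = 1 := by omega
      rw [hD 0, h']; norm_num
    · refine ⟨0, ?_⟩
      have h' : (sx : ℤ) - sy + 2 * ((ax : ℤ) - ay) - 4 * 0 = -1 := by omega
      rw [hD 0, h']; norm_num
    · refine ⟨1, ?_⟩
      have h' : (sx : ℤ) - sy + 2 * ((ax : ℤ) - ay) - 4 * 1 = -1 := by omega
      rw [hD 1, h']; norm_num
    · refine ⟨-1, ?_⟩
      have h' : (sx : ℤ) - sy + 2 * ((ax : ℤ) - ay) - 4 * (-1) = 1 := by omega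
      rw [hD (-1), h']; norm_num
  obtain ⟨m, hm⟩ := hE
  exact le_trans (addCircle_dist_le (by norm_num) _ _ m) hm

lemma spc_upper (k : ℕ) (hk : 1 ≤ k) :
    ∃ φ : (Fin k → ZMod 2) → AddCircle (4 : ℝ), IsCircularColoring 4 (SPC k) φ := by
  refine ⟨fun x => (((ZMod.val (∑ i, x i) : ℝ) + 2 * (ZMod.val (x ⟨0, hk⟩) : ℝ) : ℝ)
      : AddCircle (4:ℝ)), ?_, ?_⟩
  · intro x y hxy
    replace hxy : x - y = fun _ => (1 : ZMod 2) := hxy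
    have hax : x ⟨0, hk⟩ - y ⟨0, hk⟩ = 1 := by
      have h0 := congrFun hxy (⟨0, hk⟩ : Fin k)
      simpa using h0
    show 1 ≤ dist (((ZMod.val (∑ i, x i) : ℝ) + 2 * (ZMod.val (x ⟨0, hk⟩) : ℝ) : ℝ)
        : AddCircle (4:ℝ))
      (((ZMod.val (∑ i, y i) : ℝ) + 2 * (ZMod.val (y ⟨0, hk⟩) : ℝ) : ℝ) : AddCircle (4:ℝ))
    rw [addCircle_dist_eq]
    exact int_dist_ge _ _ _ _ (zmod2_val_le_one _) (zmod2_val_le_one _) (zmod2_val_le_one _)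
      (zmod2_val_le_one _) (zmod2_val_ne hax) _
  · intro x y hxy
    obtain ⟨i, hxy⟩ := hxy
    have hsum : (∑ i, x i) - (∑ i, y i) = 1 := by
      have h1 : (∑ i, x i) - (∑ i, y i) = ∑ j, (x - y) j := by
        rw [← Finset.sum_sub_distrib]; rfl
      rw [h1, hxy, Finset.sum_pi_single']
      simp
    show dist (((ZMod.val (∑ i, x i) : ℝ) + 2 * (ZMod.val (x ⟨0, hk⟩) : ℝ) : ℝ)
        : AddCircle (4:ℝ))
      (((ZMod.val (∑ i, y i) : ℝ) + 2 * (ZMod.val (y ⟨0, hk⟩) : ℝ) : ℝ) : AddCircle (4:ℝ))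
        ≤ 4 / 2 - 1
    rw [show (4:ℝ) / 2 - 1 = 1 by norm_num]
    exact int_dist_le _ _ _ _ (zmod2_val_le_one _) (zmod2_val_le_one _) (zmod2_val_le_one _)
      (zmod2_val_le_one _) (zmod2_val_ne hsum)

end SPCAux

/-- the circular chromatic number of `SPC(k)` equals `4`. -/
theorem spc_circular_chromatic (k : ℕ) (hk : 1 ≤ k) :
    (∃ φ : (Fin k → ZMod 2) → AddCircle (4 : ℝ), IsCircularColoring 4 (SPC k) φ) ∧
    ∀ r : ℝ, 2 ≤ r → r < 4 →
      ¬ ∃ φ : (Fin k → ZMod 2) → AddCircle r, IsCircularColoring r (SPC k) φ := by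
  constructor
  · exact spc_upper k hk
  · intro r hr2 hr4
    exact spc_no_coloring r hr2 hr4 k
end

section
/- A signed graph (G,σ) admits a homomorphism to the signed projective cube SPC(k) if and only if there exist signatures σ_1, σ_2, …, σ_{k+1} on G, each switching-equivalent to σ, such that every edge of G is negative in exactly one of the signed graphs (G, σ_1), …, (G, σ_{k+1}). -/
universe u v

section PackingProof

open Classical

private lemma zz1 : ∀ a b : ZMod 2, (a - b = 1) ↔ ¬(a = b) := by decide
private lemma zz3 : ∀ a b : ZMod 2, (¬((a = 1) ↔ (b = 1))) ↔ ¬(a = b) := by decide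
private lemma zz4 : ∀ a b : ZMod 2, (((a = 1) ↔ (b = 1))) ↔ (a = b) := by decide

private lemma xc1 {P Q B B' : Prop} (h : B ↔ B') :
    (¬(Xor' P B ↔ Xor' Q B')) ↔ ¬(P ↔ Q) := by unfold Xor' Xor; tauto
private lemma xc2 {P Q B B' : Prop} (h : ¬(B ↔ B')) :
    (¬(Xor' P B ↔ Xor' Q B')) ↔ (P ↔ Q) := by unfold Xor' Xor; tauto
private lemma xc3 {P Q B B' : Prop} (h : B ↔ B') :
    ((Xor' P B ↔ Xor' Q B')) ↔ (P ↔ Q) := by unfold Xor' Xor; tauto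
private lemma xc4 {P Q B B' : Prop} (h : ¬(B ↔ B')) :
    ((Xor' P B ↔ Xor' Q B')) ↔ ¬(P ↔ Q) := by unfold Xor' Xor; tauto

private lemma isi1 (P Q : Prop) [Decidable P] [Decidable Q] :
    ((if P then (1:ZMod 2) else 0) - (if Q then 1 else 0) = 1) ↔ ¬(P ↔ Q) := by
  split_ifs with h1 h2 <;> simp_all <;> decide
private lemma isi0 (P Q : Prop) [Decidable P] [Decidable Q] :
    ((if P then (1:ZMod 2) else 0) - (if Q then 1 else 0) = 0) ↔ (P ↔ Q) := by
  split_ifs with h1 h2 <;> simp_all <;> decide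

end PackingProof

theorem hom_spc_iff_packing' {V : Type u} (G : SignedGraph V) (k : ℕ) (hk : 1 ≤ k) :
    SignedGraph.Hom G (SPC k) ↔
      ∃ X : Fin (k+1) → Set V,
        (∀ x y, G.pos x y → ∃! i : Fin (k+1), ¬((x ∈ X i) ↔ (y ∈ X i))) ∧
        (∀ x y, G.neg x y → ∃! i : Fin (k+1), ((x ∈ X i) ↔ (y ∈ X i))) := by
  classical
  constructor
  · rintro ⟨X, f, hp, hn⟩
    set Y : Fin (k+1) → Set V :=
      Fin.lastCases (motive := fun _ => Set V) X (fun j => {v | Xor' (f v j = 1) (v ∈ X)}) with hY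
    have hYc : ∀ (j : Fin k) (v : V),
        (v ∈ Y (Fin.castSucc j)) = Xor' (f v j = 1) (v ∈ X) := by
      intro j v
      show (v ∈ Fin.lastCases (motive := fun _ => Set V) X (fun j => {v | Xor' (f v j = 1) (v ∈ X)}) (Fin.castSucc j)) = _
      rw [Fin.lastCases_castSucc]; rfl
    have hYl : ∀ v : V, (v ∈ Y (Fin.last k)) = (v ∈ X) := by
      intro v
      show (v ∈ Fin.lastCases (motive := fun _ => Set V) X (fun j => {v | Xor' (f v j = 1) (v ∈ X)}) (Fin.last k)) = _
      rw [Fin.lastCases_last]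
    refine ⟨Y, ?_, ?_⟩
    · intro x y hxy
      by_cases hX : (x ∈ X ↔ y ∈ X)
      · have hs : (G.switch X).pos x y := Or.inl ⟨hxy, hX⟩
        have h' : ∃ j, f x - f y = Pi.single j 1 := hp hs
        obtain ⟨j, hj⟩ := h'
        refine ⟨Fin.castSucc j, ?_, ?_⟩
        · simp only [hYc]
          rw [xc1 hX, zz3, ← zz1]
          have hc := congrFun hj j
          rw [Pi.sub_apply] at hc
          rw [hc, Pi.single_eq_same]
        · intro i hi
          induction i using Fin.lastCases with
          | last => exact absurd hX (by simpa [hYl] using hi)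
          | cast i =>
            simp only [hYc] at hi
            rw [xc1 hX, zz3, ← zz1] at hi
            have hc := congrFun hj i
            rw [Pi.sub_apply] at hc
            rw [hc] at hi
            by_contra hne
            have hij : i ≠ j := fun h => hne (by rw [h])
            rw [Pi.single_eq_of_ne hij] at hi
            exact absurd hi (by decide)
      · have hs : (G.switch X).neg x y := Or.inr ⟨hxy, hX⟩
        have h' : f x - f y = fun _ => 1 := hn hs
        refine ⟨Fin.last k, ?_, ?_⟩
        · simp only [hYl]; exact hX
        · intro i hi
          induction i using Fin.lastCases with
          | last => rfl
          | cast i =>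
            simp only [hYc] at hi
            rw [xc2 hX, zz4] at hi
            have hc := congrFun h' i
            rw [Pi.sub_apply] at hc
            rw [zz1] at hc
            exact absurd hi hc
    · intro x y hxy
      by_cases hX : (x ∈ X ↔ y ∈ X)
      · have hs : (G.switch X).neg x y := Or.inl ⟨hxy, hX⟩
        have h' : f x - f y = fun _ => 1 := hn hs
        refine ⟨Fin.last k, ?_, ?_⟩
        · simp only [hYl]; exact hX
        · intro i hi
          induction i using Fin.lastCases with
          | last => rfl
          | cast i =>
            simp only [hYc] at hi
            rw [xc3 hX, zz4] at hi
            have hc := congrFun h' i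
            rw [Pi.sub_apply] at hc
            rw [zz1] at hc
            exact absurd hi hc
      · have hs : (G.switch X).pos x y := Or.inr ⟨hxy, hX⟩
        have h' : ∃ j, f x - f y = Pi.single j 1 := hp hs
        obtain ⟨j, hj⟩ := h'
        refine ⟨Fin.castSucc j, ?_, ?_⟩
        · simp only [hYc]
          rw [xc4 hX, zz3, ← zz1]
          have hc := congrFun hj j
          rw [Pi.sub_apply] at hc
          rw [hc, Pi.single_eq_same]
        · intro i hi
          induction i using Fin.lastCases with
          | last => exact absurd (by simpa [hYl] using hi) hX
          | cast i =>
            simp only [hYc] at hi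
            rw [xc4 hX, zz3, ← zz1] at hi
            have hc := congrFun hj i
            rw [Pi.sub_apply] at hc
            rw [hc] at hi
            by_contra hne
            have hij : i ≠ j := fun h => hne (by rw [h])
            rw [Pi.single_eq_of_ne hij] at hi
            exact absurd hi (by decide)
  · rintro ⟨Y, hp, hn⟩
    refine ⟨Y (Fin.last k),
      fun v i => if Xor' (v ∈ Y (Fin.castSucc i)) (v ∈ Y (Fin.last k)) then (1:ZMod 2) else 0,
      ?_, ?_⟩
    · rintro x y (⟨hxy, hX⟩ | ⟨hxy, hX⟩)
      · obtain ⟨i0, hi0, hu⟩ := hp x y hxy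
        have hne : i0 ≠ Fin.last k := fun h => hi0 (h ▸ hX)
        obtain ⟨j, hj⟩ := Fin.exists_castSucc_eq.mpr hne
        show ∃ j', _ - _ = Pi.single j' 1
        refine ⟨j, funext fun i => ?_⟩
        rcases eq_or_ne i j with rfl | hij
        · rw [Pi.sub_apply, Pi.single_eq_same]
          rw [isi1, xc1 hX, hj]
          exact hi0
        · rw [Pi.sub_apply, Pi.single_eq_of_ne hij]
          rw [isi0, xc3 hX]
          by_contra h
          exact hij (Fin.castSucc_injective k ((hu _ h).trans hj.symm))
      · obtain ⟨i0, hi0, hu⟩ := hn x y hxy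
        have hne : i0 ≠ Fin.last k := fun h => hX (h ▸ hi0)
        obtain ⟨j, hj⟩ := Fin.exists_castSucc_eq.mpr hne
        show ∃ j', _ - _ = Pi.single j' 1
        refine ⟨j, funext fun i => ?_⟩
        rcases eq_or_ne i j with rfl | hij
        · rw [Pi.sub_apply, Pi.single_eq_same]
          rw [isi1, xc2 hX, hj]
          exact hi0
        · rw [Pi.sub_apply, Pi.single_eq_of_ne hij]
          rw [isi0, xc4 hX]
          intro h
          exact hij (Fin.castSucc_injective k ((hu _ h).trans hj.symm))
    · rintro x y (⟨hxy, hX⟩ | ⟨hxy, hX⟩)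
      · obtain ⟨i0, hi0, hu⟩ := hn x y hxy
        have hlast : Fin.last k = i0 := hu _ hX
        show _ - _ = fun _ => (1:ZMod 2)
        funext i
        show (if Xor' (x ∈ Y (Fin.castSucc i)) (x ∈ Y (Fin.last k)) then (1:ZMod 2) else 0)
            - (if Xor' (y ∈ Y (Fin.castSucc i)) (y ∈ Y (Fin.last k)) then (1:ZMod 2) else 0) = 1
        rw [isi1, xc1 hX]
        intro h
        have := (hu _ h).trans hlast.symm
        exact absurd this (Fin.castSucc_lt_last i).ne
      · obtain ⟨i0, hi0, hu⟩ := hp x y hxy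
        have hlast : Fin.last k = i0 := hu _ hX
        show _ - _ = fun _ => (1:ZMod 2)
        funext i
        show (if Xor' (x ∈ Y (Fin.castSucc i)) (x ∈ Y (Fin.last k)) then (1:ZMod 2) else 0)
            - (if Xor' (y ∈ Y (Fin.castSucc i)) (y ∈ Y (Fin.last k)) then (1:ZMod 2) else 0) = 1
        rw [isi1, xc2 hX]
        by_contra h
        have := (hu _ h).trans hlast.symm
        exact absurd this (Fin.castSucc_lt_last i).ne

/-- `(G,σ)` admits a homomorphism to `SPC(k)` iff there are `k+1` signatures,
each switching-equivalent to `σ` (i.e. obtained from `σ` by switching at a set `X i`), such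
that every edge of `G` is negative in exactly one of them.  (A positive edge of `(G,σ)` is
negative in the switching at `X i` iff it has exactly one end in `X i`; a negative edge is
negative in the switching at `X i` iff it does not have exactly one end in `X i`.) -/
theorem hom_spc_iff_packing {V : Type u} (G : SignedGraph V) (k : ℕ) (hk : 1 ≤ k) :
    SignedGraph.Hom G (SPC k) ↔
      ∃ X : Fin (k+1) → Set V,
        (∀ x y, G.pos x y → ∃! i : Fin (k+1), ¬((x ∈ X i) ↔ (y ∈ X i))) ∧
        (∀ x y, G.neg x y → ∃! i : Fin (k+1), ((x ∈ X i) ↔ (y ∈ X i))) := by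
  exact hom_spc_iff_packing' G k hk
end
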